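/- Let p ≡ 2 mod 3 be prime, n ∈ ℕ, and A ⊆ F_p^n a sum-free set with |A| ≥ (m_p − 1/2 + 1/p)·p^{n−1}. Then there exists u ∈ F_p^n \ {0} such that {x·u : x ∈ I_p} ⊆ A, where I_p = {m_p, ..., 2m_p − 1} and m_p = (p+1)/3. -/

import Mathlib

/-!
Averaging over the lines through the origin: the sets `{t | t • u ∈ A}` have total size
`(p - 1) #A`, so one of them, `B`, has at least `m = (p + 1) / 3` elements. It is a sum-free
subset of `ℤ/pℤ`, and Cauchy–Davenport forces `#B = m` and `B + B = Bᶜ`. This is a critical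
pair, so by Vosper's theorem `B = {c, c + d, …, c + (m - 1) d}`; as `B + B` and `Bᶜ` are then
progressions of difference `d` with the same elements, they start at the same point, `2c = c + md`.
Hence `B = d • {m, …, 2m - 1}`, and `d • u` is the required direction.
-/

open Finset
open scoped Pointwise

namespace Finset

variable {G : Type*} [DecidableEq G]

section AddCommMonoid

variable [AddCommMonoid G]

def arithProg (c d : G) (L : ℕ) : Finset G := (range L).image fun i => c + i • d

def IsArithProg (d : G) (s : Finset G) : Prop := ∃ c, s = arithProg c d #s

lemma mem_arithProg {c d x : G} {L : ℕ} : x ∈ arithProg c d L ↔ ∃ i < L, c + i • d = x := by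
  simp [arithProg]

lemma start_mem_arithProg (c d : G) {L : ℕ} (hL : 1 ≤ L) : c ∈ arithProg c d L :=
  mem_arithProg.2 ⟨0, hL, by simp⟩

lemma arithProg_add_arithProg (c₁ c₂ d : G) {L₁ L₂ : ℕ} (h₁ : 1 ≤ L₁) (h₂ : 1 ≤ L₂) :
    arithProg c₁ d L₁ + arithProg c₂ d L₂ = arithProg (c₁ + c₂) d (L₁ + L₂ - 1) := by
  ext x
  simp only [mem_add, mem_arithProg]
  constructor
  · rintro ⟨_, ⟨i, hi, rfl⟩, _, ⟨j, hj, rfl⟩, rfl⟩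
    exact ⟨i + j, by omega, by rw [add_nsmul]; abel⟩
  · rintro ⟨k, hk, rfl⟩
    refine ⟨_, ⟨min k (L₁ - 1), by omega, rfl⟩, _, ⟨k - min k (L₁ - 1), by omega, rfl⟩, ?_⟩
    rw [add_add_add_comm, ← add_nsmul, Nat.add_sub_cancel' (min_le_left _ _)]

lemma arithProg_length_add (c d : G) (L M : ℕ) :
    arithProg c d (L + M) = arithProg c d L ∪ arithProg (c + L • d) d M := by
  ext x
  simp only [mem_union, mem_arithProg]
  constructor
  · rintro ⟨i, hi, rfl⟩
    by_cases h : i < L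
    · exact Or.inl ⟨i, h, rfl⟩
    · refine Or.inr ⟨i - L, by omega, ?_⟩
      rw [add_assoc, ← add_nsmul, Nat.add_sub_cancel' (not_lt.1 h)]
  · rintro (⟨i, hi, rfl⟩ | ⟨i, hi, rfl⟩)
    · exact ⟨i, by omega, rfl⟩
    · exact ⟨L + i, by omega, by rw [add_nsmul, add_assoc]⟩

lemma arithProg_two (c d : G) : arithProg c d 2 = {c, c + d} := by
  ext x
  simp only [mem_insert, mem_singleton, mem_arithProg]
  constructor
  · rintro ⟨i, hi, rfl⟩
    interval_cases i <;> simp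
  · rintro (rfl | rfl)
    · exact ⟨0, by omega, by simp⟩
    · exact ⟨1, by omega, by simp⟩

end AddCommMonoid

section AddCommGroup

variable [AddCommGroup G]

lemma vadd_arithProg (t c d : G) (L : ℕ) : t +ᵥ arithProg c d L = arithProg (t + c) d L := by
  ext x
  simp only [mem_vadd_finset, mem_arithProg, vadd_eq_add]
  constructor
  · rintro ⟨_, ⟨i, hi, rfl⟩, rfl⟩
    exact ⟨i, hi, by abel⟩
  · rintro ⟨i, hi, rfl⟩
    exact ⟨_, ⟨i, hi, rfl⟩, by abel⟩

lemma neg_arithProg (c d : G) (L : ℕ) :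
    -arithProg c d L = arithProg (-(c + (L - 1) • d)) d L := by
  have hsplit : ∀ i < L, (L - 1) • d = (L - 1 - i) • d + i • d := fun i hi => by
    rw [← add_nsmul, Nat.sub_add_cancel (by omega)]
  ext x
  simp only [mem_neg', mem_arithProg]
  constructor
  · rintro ⟨i, hi, hx⟩
    refine ⟨L - 1 - i, by omega, ?_⟩
    rw [hsplit i hi, ← neg_neg x, ← hx]
    abel
  · rintro ⟨i, hi, rfl⟩
    refine ⟨L - 1 - i, by omega, ?_⟩
    rw [hsplit i hi]
    abel

lemma IsArithProg.vadd {d : G} {s : Finset G} (h : IsArithProg d s) (t : G) :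
    IsArithProg d (t +ᵥ s) := by
  obtain ⟨c, hc⟩ := h
  exact ⟨t + c, by rw [card_vadd_finset, ← vadd_arithProg, ← hc]⟩

lemma IsArithProg.neg {d : G} {s : Finset G} (h : IsArithProg d s) : IsArithProg d (-s) := by
  obtain ⟨c, hc⟩ := h
  exact ⟨_, by rw [card_neg, ← neg_arithProg, ← hc]⟩

lemma exists_isArithProg_of_card_eq_two {s : Finset G} (hs : #s = 2) :
    ∃ d ≠ 0, IsArithProg d s := by
  obtain ⟨a, b, hab, rfl⟩ := card_eq_two.1 hs
  exact ⟨b - a, sub_ne_zero.2 hab.symm, a, by rw [hs, arithProg_two, add_sub_cancel]⟩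

lemma mem_vadd_finset_iff_sub_mem {s : Finset G} {τ y : G} : y ∈ τ +ᵥ s ↔ y - τ ∈ s := by
  rw [← neg_vadd_mem_iff, vadd_eq_add, neg_add_eq_sub]

lemma card_add_arithProg_two (s : Finset G) (c d : G) :
    #(s + arithProg c d 2) = #(s \ (d +ᵥ s)) + #s := by
  have h : s + arithProg c d 2 = c +ᵥ (s ∪ (d +ᵥ s)) := by
    ext x
    simp only [arithProg_two, mem_add, mem_insert, mem_singleton, mem_vadd_finset, mem_union,
      vadd_eq_add]
    constructor
    · rintro ⟨a, ha, _, rfl | rfl, rfl⟩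
      · exact ⟨a, Or.inl ha, add_comm _ _⟩
      · exact ⟨d + a, Or.inr ⟨a, ha, rfl⟩, by abel⟩
    · rintro ⟨_, hy | ⟨z, hz, rfl⟩, rfl⟩
      · exact ⟨_, hy, c, Or.inl rfl, add_comm _ _⟩
      · exact ⟨z, hz, c + d, Or.inr rfl, by abel⟩
  rw [h, card_vadd_finset, ← card_sdiff_add_card, card_vadd_finset]

variable {A B : Finset G} {e β : G}

lemma eq_add_of_mem_inter_vadd (h : B ∩ (-e +ᵥ A) = {β}) {x : G} (hxA : x ∈ A)
    (hxB : x ∈ e +ᵥ B) : x = e + β := by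
  have hmem : -e + x ∈ B ∩ (-e +ᵥ A) :=
    mem_inter.2 ⟨neg_vadd_mem_iff.2 hxB, vadd_mem_vadd_finset hxA⟩
  rw [h, mem_singleton] at hmem
  rw [← hmem, add_neg_cancel_left]

lemma union_vadd_add_singleton_eq (h : B ∩ (-e +ᵥ A) = {β}) (hcrit : #(A + B) + 1 = #A + #B) :
    (A ∪ (e +ᵥ B)) + {β} = A + B := by
  have hsub := addDysonETransform.subset e (A, B)
  have hcard := addDysonETransform.card e (A, B)
  simp only [addDysonETransform_fst, addDysonETransform_snd, h, card_singleton] at hsub hcard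
  exact eq_of_subset_of_card_le hsub (by rw [card_add_singleton]; omega)

end AddCommGroup

end Finset

namespace ZMod

variable {p : ℕ} [Fact p.Prime]

lemma card_arithProg (c : ZMod p) {d : ZMod p} (hd : d ≠ 0) {L : ℕ} (hL : L ≤ p) :
    #(arithProg c d L) = L := by
  rw [arithProg, card_image_of_injOn, card_range]
  intro i hi j hj hij
  simp only [coe_range, Set.mem_Iio] at hi hj
  have hcast : (i : ZMod p) = j :=
    mul_right_cancel₀ hd (by simpa only [nsmul_eq_mul, add_right_inj] using hij)
  rwa [natCast_eq_natCast_iff', Nat.mod_eq_of_lt (by omega), Nat.mod_eq_of_lt (by omega)] at hcast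

lemma arithProg_eq_univ (c : ZMod p) {d : ZMod p} (hd : d ≠ 0) : arithProg c d p = univ :=
  eq_univ_of_card _ (by rw [card_arithProg c hd le_rfl, card p])

lemma compl_arithProg (c : ZMod p) {d : ZMod p} (hd : d ≠ 0) {L : ℕ} (hL : L ≤ p) :
    (arithProg c d L)ᶜ = arithProg (c + L • d) d (p - L) := by
  have hunion := arithProg_length_add c d L (p - L)
  rw [Nat.add_sub_cancel' hL, arithProg_eq_univ c hd] at hunion
  have hdisj : Disjoint (arithProg c d L) (arithProg (c + L • d) d (p - L)) := by
    rw [← card_union_eq_card_add_card, ← hunion, card_univ, card p,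
      card_arithProg _ hd hL, card_arithProg _ hd (Nat.sub_le p L)]
    omega
  exact IsCompl.compl_eq ⟨hdisj, codisjoint_iff.2 hunion.symm⟩

lemma eq_empty_or_eq_univ_of_vadd_eq {s : Finset (ZMod p)} {τ : ZMod p} (hτ : τ ≠ 0)
    (h : τ +ᵥ s = s) : s = ∅ ∨ s = univ := by
  have : Fact (Nat.card (ZMod p)).Prime := by rwa [Nat.card_zmod]
  obtain hbot | htop := (AddAction.stabilizer (ZMod p) s).eq_bot_or_eq_top_of_prime_card
  · exact absurd (hbot ▸ AddAction.mem_stabilizer_iff.2 h) (by simpa using hτ)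
  · refine s.eq_empty_or_nonempty.imp id fun ⟨x, hx⟩ => eq_univ_of_forall fun y => ?_
    have hstab : (y - x) +ᵥ s = s := AddAction.mem_stabilizer_iff.1 (htop ▸ AddSubgroup.mem_top _)
    exact hstab ▸ mem_vadd_finset.2 ⟨x, hx, by simp⟩

lemma eq_of_arithProg_eq {c₁ c₂ d : ZMod p} (hd : d ≠ 0) {L : ℕ} (h1 : 1 ≤ L) (hL : L < p)
    (h : arithProg c₁ d L = arithProg c₂ d L) : c₁ = c₂ := by
  have hvadd : (c₂ - c₁) +ᵥ arithProg c₁ d L = arithProg c₁ d L := by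
    rw [vadd_arithProg, sub_add_cancel, h]
  by_contra hne
  rcases eq_empty_or_eq_univ_of_vadd_eq (sub_ne_zero.2 (Ne.symm hne)) hvadd with h0 | h0 <;>
    have := congrArg Finset.card h0 <;>
    simp only [card_arithProg _ hd hL.le, card_empty, card_univ, card p] at this <;> omega

/-- Walking down from any element of `s` by steps of `τ` one can only leave `s` at the unique
`a ∈ s` with `a - τ ∉ s`; so `s` is the progression of difference `τ` starting at `a`. -/
lemma isArithProg_of_card_sdiff_vadd_le_one {s : Finset (ZMod p)} {τ : ZMod p} (hτ : τ ≠ 0)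
    (h : #(s \ (τ +ᵥ s)) ≤ 1) : IsArithProg τ s := by
  obtain h0 | h1 := Nat.le_one_iff_eq_zero_or_eq_one.1 h
  · have hs : τ +ᵥ s = s := (eq_of_subset_of_card_le
      (sdiff_eq_empty_iff_subset.1 (card_eq_zero.1 h0)) (card_vadd_finset τ s).le).symm
    rcases eq_empty_or_eq_univ_of_vadd_eq hτ hs with rfl | rfl
    · exact ⟨0, by simp [arithProg]⟩
    · exact ⟨0, by rw [card_univ, card p, arithProg_eq_univ 0 hτ]⟩
  obtain ⟨a, ha⟩ := card_eq_one.1 h1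
  have hsdiff : ∀ y, y ∈ s ∧ y - τ ∉ s ↔ y = a := fun y => by
    rw [← mem_singleton, ← ha, mem_sdiff, mem_vadd_finset_iff_sub_mem]
  have has : a ∈ s ∧ a - τ ∉ s := (hsdiff a).2 rfl
  obtain ⟨j, hj, hja⟩ := mem_arithProg.1 (arithProg_eq_univ a hτ ▸ mem_univ (a - τ))
  have hex : ∃ j, a + j • τ ∉ s := ⟨j, hja ▸ has.2⟩
  set L := Nat.find hex
  have hL1 : 1 ≤ L := (Nat.find_pos hex).2 (by simpa using has.1)
  have hP : arithProg a τ L ⊆ s := fun x hx => by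
    obtain ⟨i, hi, rfl⟩ := mem_arithProg.1 hx
    exact not_not.1 (Nat.find_min hex hi)
  have hY : s \ arithProg a τ L ⊆ τ +ᵥ (s \ arithProg a τ L) := by
    intro y hy
    obtain ⟨hys, hyP⟩ := mem_sdiff.1 hy
    have hya : y ≠ a := fun hya => hyP (hya ▸ start_mem_arithProg a τ hL1)
    refine mem_vadd_finset_iff_sub_mem.2 (mem_sdiff.2 ⟨not_not.1 fun h => hya ((hsdiff y).1
      ⟨hys, h⟩), fun hyP' => ?_⟩)
    obtain ⟨i, hi, hi'⟩ := mem_arithProg.1 hyP'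
    have hy' : a + (i + 1) • τ = y := by rw [succ_nsmul, ← add_assoc, hi', sub_add_cancel]
    rcases (Nat.succ_le_of_lt hi).lt_or_eq with hlt | heq
    · exact hyP (mem_arithProg.2 ⟨i + 1, hlt, hy'⟩)
    · exact Nat.find_spec hex (by rwa [show Nat.find hex = i + 1 from heq.symm, hy'])
  have hY0 : s \ arithProg a τ L = ∅ :=
    (eq_empty_or_eq_univ_of_vadd_eq hτ (eq_of_subset_of_card_le hY
      (card_vadd_finset _ _).le).symm).resolve_right fun hU =>
        (mem_sdiff.1 (hU ▸ mem_univ a)).2 (start_mem_arithProg a τ hL1)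
  have hsP : s = arithProg a τ L := (sdiff_eq_empty_iff_subset.1 hY0).antisymm hP
  exact ⟨a, by rw [hsP, card_arithProg a hτ ((Nat.find_min' hex (hja ▸ has.2)).trans hj.le)]⟩

/-- If `#(s \ (d +ᵥ s)) ≥ 2`, adding `{c, c + d}` already grows `s` by two, and
Cauchy–Davenport accounts for the remaining `L - 2` terms of the progression. -/
lemma isArithProg_of_card_add_arithProg_lt {s : Finset (ZMod p)} {c d : ZMod p} {L : ℕ}
    (hs : s.Nonempty) (hd : d ≠ 0) (hL : 2 ≤ L) (hlt : #(s + arithProg c d L) < #s + L)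
    (hp : #s + L ≤ p) : IsArithProg d s := by
  refine isArithProg_of_card_sdiff_vadd_le_one hd (not_lt.1 fun h2 => hlt.not_ge ?_)
  have hsplit : arithProg c d L = arithProg c d 2 + arithProg 0 d (L - 1) := by
    rw [arithProg_add_arithProg c 0 d (by norm_num) (by omega), add_zero]
    congr 1
    omega
  have hcd := cauchy_davenport Fact.out (hs.add ⟨c, start_mem_arithProg c d (L := 2) (by norm_num)⟩)
    ⟨0, start_mem_arithProg 0 d (by omega : 1 ≤ L - 1)⟩
  rw [card_add_arithProg_two, card_arithProg 0 hd (by omega)] at hcd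
  rw [hsplit, ← add_assoc]
  omega

/-- `-s` added to the complement of the progression misses `t`, so it is small. -/
lemma isArithProg_of_add_subset_arithProg {s t : Finset (ZMod p)} {c d : ZMod p} {L : ℕ}
    (hs : s.Nonempty) (ht : t.Nonempty) (hd : d ≠ 0) (hst : s + t ⊆ arithProg c d L)
    (hcard : #s + #t = L + 1) (hp : L + 2 ≤ p) : IsArithProg d s := by
  have hsub : -s + (arithProg c d L)ᶜ ⊆ tᶜ := by
    intro x hx
    obtain ⟨_, ha', y, hy, rfl⟩ := mem_add.1 hx
    obtain ⟨a, ha, rfl⟩ := mem_neg.1 ha'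
    rw [mem_compl] at hy ⊢
    intro hxt
    exact hy (hst (by simpa using add_mem_add ha hxt))
  rw [compl_arithProg c hd (by omega)] at hsub
  have hle := card_le_card hsub
  rw [card_compl, card p] at hle
  have ht1 := ht.card_pos
  simpa using (isArithProg_of_card_add_arithProg_lt hs.neg hd (c := c + L • d) (L := p - L)
    (by omega) (by rw [card_neg]; omega) (by rw [card_neg]; omega)).neg

/-- Both sets `A ∪ (eᵢ +ᵥ B)` are `-β +ᵥ (A + B)`, so away from the single point of
`A ∩ (e₁ +ᵥ B)` the set `e₁ +ᵥ B` is invariant under adding `e₂ - e₁`. -/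
lemma isArithProg_of_inter_vadd_eq_singleton {A B : Finset (ZMod p)} {e₁ e₂ β : ZMod p}
    (hne : e₁ ≠ e₂) (h₁ : B ∩ (-e₁ +ᵥ A) = {β}) (h₂ : B ∩ (-e₂ +ᵥ A) = {β})
    (hcrit : #(A + B) + 1 = #A + #B) : IsArithProg (e₂ - e₁) B := by
  have hunion : A ∪ (e₁ +ᵥ B) = A ∪ (e₂ +ᵥ B) := by
    have := (union_vadd_add_singleton_eq h₁ hcrit).trans
      (union_vadd_add_singleton_eq h₂ hcrit).symm
    rw [add_singleton, add_singleton] at this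
    exact image_injective (add_left_injective β) this
  have hshift : (e₂ - e₁) +ᵥ (e₁ +ᵥ B) = e₂ +ᵥ B := by rw [vadd_vadd, sub_add_cancel]
  have hsd : (e₁ +ᵥ B) \ ((e₂ - e₁) +ᵥ (e₁ +ᵥ B)) ⊆ {e₁ + β} := by
    intro x hx
    obtain ⟨hx₁, hx₂⟩ := mem_sdiff.1 hx
    by_cases hxA : x ∈ A
    · exact mem_singleton.2 (eq_add_of_mem_inter_vadd h₁ hxA hx₁)
    · have : x ∈ A ∪ (e₂ +ᵥ B) := hunion ▸ mem_union_right A hx₁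
      exact absurd ((mem_union.1 this).resolve_left hxA) (hshift ▸ hx₂)
  have hX := isArithProg_of_card_sdiff_vadd_le_one (sub_ne_zero.2 hne.symm)
    ((card_le_card hsd).trans (card_singleton _).le)
  simpa only [neg_vadd_vadd] using hX.vadd (-e₁)

/-- Vosper's theorem when no e-transform keeps at least two, but not all, elements of `B`:
then `A` has two elements `α` whose translate `(α - β) +ᵥ B` meets `A` only in `α`. -/
lemma exists_isArithProg_of_forall_card_inter_vadd {A B : Finset (ZMod p)} (hA : 2 ≤ #A)
    (hB : 3 ≤ #B) (hcrit : #(A + B) + 1 = #A + #B) (hp : #(A + B) + 2 ≤ p)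
    (hdeg : ∀ e : ZMod p, 2 ≤ #(B ∩ (-e +ᵥ A)) → #B ≤ #(B ∩ (-e +ᵥ A))) :
    ∃ d ≠ 0, IsArithProg d B := by
  obtain ⟨β, hβ⟩ : B.Nonempty := card_pos.1 (by omega)
  set H : Finset (ZMod p) := {e | e +ᵥ B ⊆ A}
  have hHB : H + B ⊆ A := by
    intro x hx
    obtain ⟨e, he, b, hb, rfl⟩ := mem_add.1 hx
    exact (mem_filter.1 he).2 (vadd_mem_vadd_finset hb)
  have hH : #H + 2 ≤ #A := by
    rcases H.eq_empty_or_nonempty with h0 | hne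
    · rw [h0, card_empty]
      omega
    · have := cauchy_davenport Fact.out hne ⟨β, hβ⟩
      have := card_le_card hHB
      have := card_le_card_add_right (s := A) ⟨β, hβ⟩
      omega
  have hV : 1 < #{α ∈ A | α - β ∉ H} := by
    have hsplit := card_filter_add_card_filter_not (s := A) (fun α => α - β ∈ H)
    have hle : #{α ∈ A | α - β ∈ H} ≤ #H := card_le_card_of_injOn (· - β)
      (fun α hα => (mem_filter.1 hα).2) (fun x _ y _ h => sub_left_injective h)
    omega
  have hsingle : ∀ α ∈ {α ∈ A | α - β ∉ H}, B ∩ (-(α - β) +ᵥ A) = {β} := by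
    intro α hα
    obtain ⟨hαA, hαH⟩ := mem_filter.1 hα
    have hβmem : β ∈ B ∩ (-(α - β) +ᵥ A) :=
      mem_inter.2 ⟨hβ, by rwa [← neg_vadd_mem_iff, neg_neg, vadd_eq_add, sub_add_cancel]⟩
    refine eq_singleton_iff_unique_mem.2 ⟨hβmem, fun x hx => ?_⟩
    by_contra hxβ
    have hsub : B ⊆ -(α - β) +ᵥ A := inter_eq_left.1 (eq_of_subset_of_card_le inter_subset_left
      (hdeg _ (one_lt_card.2 ⟨x, hx, β, hβmem, hxβ⟩)))
    exact hαH (mem_filter.2 ⟨mem_univ _, by rwa [subset_vadd_finset_iff, neg_neg] at hsub⟩)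
  obtain ⟨α₁, h₁, α₂, h₂, hne⟩ := one_lt_card.1 hV
  have hne' : α₁ - β ≠ α₂ - β := (sub_left_injective (b := β)).ne hne
  exact ⟨_, sub_ne_zero.2 hne'.symm,
    isArithProg_of_inter_vadd_eq_singleton hne' (hsingle α₁ h₁) (hsingle α₂ h₂) hcrit⟩

/-- An e-transform keeping at least two elements of `B` gives a critical pair with a smaller
second set and, by Cauchy–Davenport, the same sumset; by induction that sumset is a progression. -/
lemma exists_isArithProg_right_of_card_add_eq {A B : Finset (ZMod p)} (hA : 2 ≤ #A)
    (hB : 2 ≤ #B) (hcrit : #(A + B) + 1 = #A + #B) (hp : #(A + B) + 2 ≤ p) :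
    ∃ d ≠ 0, IsArithProg d B := by
  induction hk : #B using Nat.strong_induction_on generalizing A B with
  | _ k ih =>
  obtain hB2 | hB3 := hB.eq_or_lt
  · exact exists_isArithProg_of_card_eq_two hB2.symm
  by_cases htrans : ∃ e : ZMod p, 2 ≤ #(B ∩ (-e +ᵥ A)) ∧ #(B ∩ (-e +ᵥ A)) < #B
  swap
  · simp only [not_exists, not_and, not_lt] at htrans
    exact exists_isArithProg_of_forall_card_inter_vadd hA hB3 hcrit hp htrans
  obtain ⟨e, h2, hlt⟩ := htrans
  have hsub := addDysonETransform.subset e (A, B)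
  have hcard := addDysonETransform.card e (A, B)
  simp only [addDysonETransform_fst, addDysonETransform_snd] at hsub hcard
  set A' := A ∪ (e +ᵥ B)
  set B' := B ∩ (-e +ᵥ A)
  have hA' : #A ≤ #A' := card_le_card subset_union_left
  have hAne : A.Nonempty := card_pos.1 (by omega)
  have hA'ne : A'.Nonempty := card_pos.1 (by omega)
  have hB'ne : B'.Nonempty := card_pos.1 (by omega)
  have hAB : A' + B' = A + B := eq_of_subset_of_card_le hsub (by
    have := cauchy_davenport Fact.out hA'ne hB'ne
    omega)
  obtain ⟨d, hd, c, hc⟩ := ih #B' (hk ▸ hlt) (A := A') (B := B') (by omega) h2 (by rw [hAB]; omega)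
    (by rw [hAB]; omega) rfl
  obtain ⟨c', hc'⟩ := isArithProg_of_card_add_arithProg_lt hA'ne hd h2
    (by rw [← hc, hAB]; omega) (by omega)
  have hABap : A + B = arithProg (c' + c) d (#A + #B - 1) := by
    rw [← hAB, ← hcard, ← arithProg_add_arithProg _ _ _ hA'ne.card_pos hB'ne.card_pos, ← hc', ← hc]
  refine ⟨d, hd, isArithProg_of_add_subset_arithProg (card_pos.1 (by omega)) hAne hd
    (add_comm A B ▸ hABap.le) (by omega) (by omega)⟩

theorem vosper {A B : Finset (ZMod p)} (hA : 2 ≤ #A) (hB : 2 ≤ #B)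
    (hcrit : #(A + B) + 1 = #A + #B) (hp : #(A + B) + 2 ≤ p) :
    ∃ d ≠ 0, IsArithProg d A ∧ IsArithProg d B := by
  obtain ⟨d, hd, c, hc⟩ := exists_isArithProg_right_of_card_add_eq hA hB hcrit hp
  exact ⟨d, hd, isArithProg_of_card_add_arithProg_lt (card_pos.1 (by omega)) hd hB
    (by rw [← hc]; omega) (by omega), c, hc⟩

theorem eq_arithProg_of_sumFree {B : Finset (ZMod p)} (hsf : ∀ x ∈ B, ∀ y ∈ B, x + y ∉ B)
    (hcard : p + 1 ≤ 3 * #B) : 3 * #B = p + 1 ∧ ∃ d ≠ 0, B = arithProg (#B • d) d #B := by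
  have hBne : B.Nonempty := card_pos.1 (by omega)
  have hsub : B + B ⊆ Bᶜ := fun x hx => by
    obtain ⟨a, ha, b, hb, rfl⟩ := mem_add.1 hx
    exact mem_compl.2 (hsf a ha b hb)
  have hle := card_le_card hsub
  rw [card_compl, card p] at hle
  have hcd := cauchy_davenport Fact.out hBne hBne
  have hp2 := (Fact.out : p.Prime).two_le
  have h3 : 3 * #B = p + 1 := by omega
  refine ⟨h3, ?_⟩
  obtain hB1 | hB2 : #B = 1 ∨ 2 ≤ #B := by omega
  · obtain ⟨b, rfl⟩ := card_eq_one.1 hB1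
    refine ⟨b, fun hb => hsf b (mem_singleton_self b) b (mem_singleton_self b) (by simp [hb]), ?_⟩
    simp [arithProg]
  obtain ⟨d, hd, -, c, hc⟩ := vosper hB2 hB2 (by omega) (by omega)
  have hBB : B + B = Bᶜ := eq_of_subset_of_card_le hsub (by rw [card_compl, card p]; omega)
  generalize #B = m at *
  subst hc
  rw [arithProg_add_arithProg _ _ _ (by omega) (by omega), compl_arithProg c hd (by omega),
    show p - m = m + m - 1 by omega] at hBB
  have hstart : c + c = c + m • d := eq_of_arithProg_eq hd (by omega) (by omega) hBB
  exact ⟨d, hd, by rw [add_left_cancel hstart]⟩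

end ZMod

lemma sum_card_smul_mem {K V : Type*} [Field K] [Fintype K] [AddCommGroup V] [Module K V]
    [Fintype V] [DecidableEq V] {S : Finset V} (h0 : (0 : V) ∉ S) :
    ∑ u : V, #{t : K | t • u ∈ S} = (Fintype.card K - 1) * #S := by
  classical
  simp only [card_filter]
  rw [sum_comm]
  have hfiber : ∀ t : K, ∑ u : V, (if t • u ∈ S then 1 else 0) = if t = 0 then 0 else #S := by
    intro t
    rw [← card_filter]
    split_ifs with ht
    · simp [ht, h0]
    · refine card_nbij' (t • ·) (t⁻¹ • ·) (fun u hu => ?_) (fun x hx => ?_) (fun u _ => ?_)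
        (fun x _ => ?_) <;> simp_all [smul_smul]
  rw [sum_congr rfl fun t _ => hfiber t, sum_ite, sum_const_zero, zero_add, sum_const,
    filter_ne' univ, card_erase_of_mem (mem_univ _), card_univ, smul_eq_mul]

lemma exists_card_smul_mem_ge {p : ℕ} [Fact p.Prime] {n m : ℕ} {S : Finset (Fin n → ZMod p)}
    (h0 : 0 ∉ S) (hm : 3 * m = p + 1) (hS : (2 * p * m - p + 2) * p ^ (n - 1) ≤ 2 * p * #S) :
    ∃ u, m ≤ #{t : ZMod p | t • u ∈ S} := by
  have hlt : ∑ _u : Fin n → ZMod p, (m - 1) < ∑ u, #{t : ZMod p | t • u ∈ S} := by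
    rw [sum_card_smul_mem h0, sum_const, card_univ, smul_eq_mul]
    simp only [Fintype.card_fun, ZMod.card, Fintype.card_fin]
    have hpow : p ^ n ≤ p * p ^ (n - 1) := by
      rw [← pow_succ']
      exact Nat.pow_le_pow_right (by omega) (by omega)
    have hN : 1 ≤ p ^ (n - 1) := Nat.one_le_pow _ _ (by omega)
    generalize p ^ (n - 1) = N at hS hpow hN
    obtain ⟨k, rfl⟩ : ∃ k, m = k + 1 := ⟨m - 1, by omega⟩
    obtain rfl : p = 3 * k + 2 := by omega
    rw [show 2 * (3 * k + 2) * (k + 1) = (3 * k + 2) * (2 * k + 1) + (3 * k + 2) by ring,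
      Nat.add_sub_cancel] at hS
    rw [Nat.add_sub_cancel, show 3 * k + 2 - 1 = 3 * k + 1 by omega]
    -- with `p = 3k + 2` the two bounds differ by `(3k² + 11k + 4) • p ^ (n - 1)`
    by_contra! hcon
    have h1 := Nat.mul_le_mul_left (3 * k + 1) hS
    have h2 := Nat.mul_le_mul_left (2 * (3 * k + 2)) (hcon.trans (Nat.mul_le_mul_right k hpow))
    nlinarith [Nat.zero_le (k * k * N), Nat.zero_le (k * N)]
  obtain ⟨u, -, hu⟩ := exists_lt_of_sum_lt hlt
  exact ⟨u, by omega⟩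

theorem stmt_14 (p : ℕ) [Fact p.Prime] (hp3 : p % 3 = 2)
    (n : ℕ) (A : Set (Fin n → ZMod p))
    (hsf : ∀ a ∈ A, ∀ b ∈ A, a + b ∉ A)
    (hcard : 2 * p * A.ncard ≥ (2 * p * ((p + 1) / 3) - p + 2) * p ^ (n - 1)) :
    ∃ u : Fin n → ZMod p, u ≠ 0 ∧
      ∀ k : ℕ, (p + 1) / 3 ≤ k → k ≤ 2 * ((p + 1) / 3) - 1 → (k : ZMod p) • u ∈ A := by
  obtain ⟨S, rfl⟩ : ∃ S : Finset (Fin n → ZMod p), A = S := ⟨A.toFinite.toFinset, by simp⟩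
  rw [Set.ncard_coe_finset] at hcard
  have h0 : (0 : Fin n → ZMod p) ∉ S := fun h => hsf 0 h 0 h (by simpa using h)
  obtain ⟨u, hu⟩ := exists_card_smul_mem_ge h0 (by omega) hcard
  have hu0 : u ≠ 0 := by
    rintro rfl
    have hempty : #{t : ZMod p | t • (0 : Fin n → ZMod p) ∈ S} = 0 := by simp [h0]
    omega
  set B : Finset (ZMod p) := {t | t • u ∈ S}
  have hline : ∀ x ∈ B, ∀ y ∈ B, x + y ∉ B := by
    simp only [B, mem_filter, mem_univ, true_and, add_smul]
    exact fun x hx y hy => hsf _ hx _ hy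
  obtain ⟨h3, d, hd, hB⟩ := ZMod.eq_arithProg_of_sumFree hline (by omega)
  refine ⟨d • u, smul_ne_zero hd hu0, fun k hk₁ hk₂ => ?_⟩
  have hk : k • d ∈ B := hB ▸ mem_arithProg.2
    ⟨k - (p + 1) / 3, by omega, by rw [← add_nsmul]; congr 1; omega⟩
  simpa [B, smul_smul, nsmul_eq_mul] using hk
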